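/- arXiv:2602.03201 — 3 statements merged into one kernel-verified Lean document; each statement's English description precedes it below -/
import Mathlib

section
/- Let S, A be finite nonempty sets, r : S × A → ℝ, γ ∈ [0,1), η ≥ 0, and P(·|s,a) a probability distribution on S for each (s,a). Define the shaped Bellman operator T by (TQ)(s,a) = r(s,a) + γ·E_{s'∼P(·|s,a)}[Φ_Q(s')] − Φ_Q(s) + γ·E_{s'∼P(·|s,a)}[max_{a'} Q(s',a')], where Φ_Q(s) = η·max_a Q(s,a). Then for all Q1, Q2: ‖T Q1 − T Q2‖_∞ ≤ (η(1+γ) + γ)·‖Q1 − Q2‖_∞. -/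
/-!
Rewrite the shaped operator as
`(TQ)(s,a) = r(s,a) + γ(1+η)·E[V_Q(s')] − η·V_Q(s)` with `V_Q(s) = max_a Q(s,a)`.
The map `Q ↦ V_Q` is 1-Lipschitz in the sup norm, and so is taking an expectation, so the two
`Q`-dependent terms change by at most `γ(1+η)‖Q₁ − Q₂‖_∞` and `η‖Q₁ − Q₂‖_∞` respectively.
-/

open Finset

theorem abs_ciSup_sub_ciSup_le {ι : Type*} [Nonempty ι] {f g : ι → ℝ}
    (hf : BddAbove (Set.range f)) (hg : BddAbove (Set.range g)) {M : ℝ}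
    (h : ∀ i, |f i - g i| ≤ M) : |(⨆ i, f i) - ⨆ i, g i| ≤ M := by
  rw [abs_sub_le_iff, sub_le_iff_le_add, sub_le_iff_le_add]
  constructor
  · refine ciSup_le fun i => ?_
    linarith [le_ciSup hg i, (abs_le.mp (h i)).2]
  · refine ciSup_le fun i => ?_
    linarith [le_ciSup hf i, (abs_le.mp (h i)).1]

theorem abs_sum_mul_le_of_abs_le {ι : Type*} {s : Finset ι} {w x : ι → ℝ} {M : ℝ}
    (hw0 : ∀ i ∈ s, 0 ≤ w i) (hw1 : ∑ i ∈ s, w i = 1) (hx : ∀ i ∈ s, |x i| ≤ M) :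
    |∑ i ∈ s, w i * x i| ≤ M :=
  calc |∑ i ∈ s, w i * x i|
      ≤ ∑ i ∈ s, |w i * x i| := abs_sum_le_sum_abs _ _
    _ ≤ ∑ i ∈ s, w i * M := sum_le_sum fun i hi => by
        rw [abs_mul, abs_of_nonneg (hw0 i hi)]
        exact mul_le_mul_of_nonneg_left (hx i hi) (hw0 i hi)
    _ = M := by rw [← sum_mul, hw1, one_mul]

section ShapedBellman

variable {S A : Type*} [Fintype S]

noncomputable def shapedBellman (r : S → A → ℝ) (γ η : ℝ) (P : S → A → S → ℝ)
    (Q : S → A → ℝ) (s : S) (a : A) : ℝ :=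
  r s a + γ * (1 + η) * ∑ s', P s a s' * (⨆ a', Q s' a') - η * ⨆ a', Q s a'

theorem abs_shapedBellman_sub_le [Finite A] [Nonempty A] {r : S → A → ℝ} {γ η : ℝ}
    (hγ : 0 ≤ γ) (hη : 0 ≤ η) {P : S → A → S → ℝ} (hP0 : ∀ s a s', 0 ≤ P s a s')
    (hP1 : ∀ s a, ∑ s', P s a s' = 1) {Q₁ Q₂ : S → A → ℝ} {M : ℝ}
    (hQ : ∀ s a, |Q₁ s a - Q₂ s a| ≤ M) (s : S) (a : A) :
    |shapedBellman r γ η P Q₁ s a - shapedBellman r γ η P Q₂ s a| ≤ (η * (1 + γ) + γ) * M := by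
  have hV : ∀ s, |(⨆ a', Q₁ s a') - ⨆ a', Q₂ s a'| ≤ M := fun s =>
    abs_ciSup_sub_ciSup_le (Set.finite_range _).bddAbove (Set.finite_range _).bddAbove (hQ s)
  have hE : |∑ s', P s a s' * ((⨆ a', Q₁ s' a') - ⨆ a', Q₂ s' a')| ≤ M :=
    abs_sum_mul_le_of_abs_le (fun s' _ => hP0 s a s') (hP1 s a) fun s' _ => hV s'
  have hsub : shapedBellman r γ η P Q₁ s a - shapedBellman r γ η P Q₂ s a =
      γ * (1 + η) * ∑ s', P s a s' * ((⨆ a', Q₁ s' a') - ⨆ a', Q₂ s' a')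
        - η * ((⨆ a', Q₁ s a') - ⨆ a', Q₂ s a') := by
    simp only [shapedBellman, mul_sub, sum_sub_distrib]
    ring
  rw [hsub]
  calc _ ≤ |γ * (1 + η) * ∑ s', P s a s' * ((⨆ a', Q₁ s' a') - ⨆ a', Q₂ s' a')|
          + |η * ((⨆ a', Q₁ s a') - ⨆ a', Q₂ s a')| := abs_sub _ _
    _ ≤ γ * (1 + η) * M + η * M := by
        rw [abs_mul (γ * (1 + η)), abs_mul η, abs_of_nonneg (by positivity : 0 ≤ γ * (1 + η)),
          abs_of_nonneg hη]
        gcongr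
        exact hV s
    _ = (η * (1 + γ) + γ) * M := by ring

end ShapedBellman

theorem shaped_bellman_lipschitz_general {S A : Type*} [Fintype S] [Fintype A] [Nonempty A]
    (r : S → A → ℝ) (γ η : ℝ) (hγ0 : 0 ≤ γ) (hη : 0 ≤ η)
    (P : S → A → S → ℝ) (hP0 : ∀ s a s', 0 ≤ P s a s') (hP1 : ∀ s a, ∑ s', P s a s' = 1)
    (T : (S → A → ℝ) → (S → A → ℝ))
    (hT : ∀ Q s a, T Q s a =
      r s a + γ * (∑ s', P s a s' * (η * ⨆ a' : A, Q s' a'))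
        - η * (⨆ a' : A, Q s a')
        + γ * (∑ s', P s a s' * ⨆ a' : A, Q s' a'))
    (Q1 Q2 : S → A → ℝ) :
    (⨆ p : S × A, |T Q1 p.1 p.2 - T Q2 p.1 p.2|) ≤
      (η * (1 + γ) + γ) * ⨆ p : S × A, |Q1 p.1 p.2 - Q2 p.1 p.2| := by
  have hT' : T = shapedBellman r γ η P := by
    ext Q s a
    simp only [hT, shapedBellman, mul_left_comm _ η, ← mul_sum]
    ring
  set M := ⨆ p : S × A, |Q1 p.1 p.2 - Q2 p.1 p.2|
  have hM : ∀ s a, |Q1 s a - Q2 s a| ≤ M := fun s a =>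
    le_ciSup (f := fun p : S × A => |Q1 p.1 p.2 - Q2 p.1 p.2|) (Set.finite_range _).bddAbove (s, a)
  have hM0 : 0 ≤ M := Real.iSup_nonneg fun _ => abs_nonneg _
  rw [hT']
  exact Real.iSup_le (fun p => abs_shapedBellman_sub_le hγ0 hη hP0 hP1 hM p.1 p.2)
    (by positivity)

/-- The shaped Bellman operator
`(TQ)(s,a) = r(s,a) + γ·E[Φ_Q(s')] − Φ_Q(s) + γ·E[max_{a'} Q(s',a')]`,
with `Φ_Q(s) = η·max_a Q(s,a)`, satisfies
`‖T Q1 − T Q2‖_∞ ≤ (η(1+γ) + γ)·‖Q1 − Q2‖_∞` on a finite MDP. -/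
theorem shaped_bellman_lipschitz {S A : Type*} [Fintype S] [Nonempty S] [Fintype A] [Nonempty A]
    (r : S → A → ℝ) (γ η : ℝ) (hγ0 : 0 ≤ γ) (hγ1 : γ < 1) (hη : 0 ≤ η)
    (P : S → A → S → ℝ) (hP0 : ∀ s a s', 0 ≤ P s a s') (hP1 : ∀ s a, ∑ s', P s a s' = 1)
    (T : (S → A → ℝ) → (S → A → ℝ))
    (hT : ∀ Q s a, T Q s a =
      r s a + γ * (∑ s', P s a s' * (η * ⨆ a' : A, Q s' a'))
        - η * (⨆ a' : A, Q s a')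
        + γ * (∑ s', P s a s' * ⨆ a' : A, Q s' a'))
    (Q1 Q2 : S → A → ℝ) :
    (⨆ p : S × A, |T Q1 p.1 p.2 - T Q2 p.1 p.2|) ≤
      (η * (1 + γ) + γ) * ⨆ p : S × A, |Q1 p.1 p.2 - Q2 p.1 p.2| :=
  shaped_bellman_lipschitz_general r γ η hγ0 hη P hP0 hP1 T hT Q1 Q2
end

section
/- With the shaped Bellman operator T of the previous setting, if η < (1 − γ)/(1 + γ) then T is a contraction on the space of functions S × A → ℝ with the sup-norm metric, with Lipschitz constant η(1+γ) + γ < 1. -/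
/-!
Writing `V Q s = max_a Q s a`, the operator is `T Q = r + γ(1 + η) P V Q - η V Q`. Taking the
maximum over actions is 1-Lipschitz for the sup norm and averaging against the stochastic kernel `P`
does not increase sup distances, so `T` is Lipschitz with constant `γ(1 + η) + η`, which is `< 1`
exactly when `η < (1 - γ)/(1 + γ)`.
-/

open Finset

theorem ciSup_le_ciSup_add_dist {ι : Type*} [Fintype ι] [Nonempty ι] (f g : ι → ℝ) :
    ⨆ i, f i ≤ (⨆ i, g i) + dist f g :=
  ciSup_le fun i => by
    have hfg : f i - g i ≤ dist f g :=
      (le_abs_self _).trans ((Real.dist_eq _ _).symm.le.trans (dist_le_pi_dist f g i))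
    have hg : g i ≤ ⨆ i, g i := le_ciSup (Set.finite_range g).bddAbove i
    linarith

theorem dist_ciSup_le_dist {ι : Type*} [Fintype ι] [Nonempty ι] (f g : ι → ℝ) :
    dist (⨆ i, f i) (⨆ i, g i) ≤ dist f g := by
  rw [Real.dist_eq, abs_sub_le_iff]
  have hfg := ciSup_le_ciSup_add_dist f g
  have hgf := ciSup_le_ciSup_add_dist g f
  rw [dist_comm] at hgf
  constructor <;> linarith

theorem dist_ciSup_apply_le_dist {S A : Type*} [Fintype S] [Fintype A] [Nonempty A]
    (Q₁ Q₂ : S → A → ℝ) :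
    dist (fun s => ⨆ a, Q₁ s a) (fun s => ⨆ a, Q₂ s a) ≤ dist Q₁ Q₂ :=
  dist_pi_le_iff dist_nonneg |>.2 fun s =>
    (dist_ciSup_le_dist (Q₁ s) (Q₂ s)).trans (dist_le_pi_dist Q₁ Q₂ s)

theorem dist_sum_mul_le_dist {ι : Type*} [Fintype ι] {p : ι → ℝ} (hp0 : ∀ i, 0 ≤ p i)
    (hp1 : ∑ i, p i ≤ 1) (x y : ι → ℝ) :
    dist (∑ i, p i * x i) (∑ i, p i * y i) ≤ dist x y := by
  rw [Real.dist_eq, ← sum_sub_distrib]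
  calc |∑ i, (p i * x i - p i * y i)|
      ≤ ∑ i, p i * dist (x i) (y i) := by
        refine (abs_sum_le_sum_abs _ _).trans (sum_le_sum fun i _ => ?_)
        rw [← mul_sub, abs_mul, abs_of_nonneg (hp0 i), Real.dist_eq]
    _ ≤ ∑ i, p i * dist x y := sum_le_sum fun i _ =>
        mul_le_mul_of_nonneg_left (dist_le_pi_dist x y i) (hp0 i)
    _ ≤ dist x y := by
        rw [← sum_mul]
        exact mul_le_of_le_one_left dist_nonneg hp1

theorem dist_add_mul_sub_mul_le {c a b x x' y y' : ℝ} (ha : 0 ≤ a) (hb : 0 ≤ b) :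
    dist (c + a * x - b * y) (c + a * x' - b * y') ≤ a * dist x x' + b * dist y y' := by
  rw [Real.dist_eq, Real.dist_eq, Real.dist_eq,
    show c + a * x - b * y - (c + a * x' - b * y') = a * (x - x') - b * (y - y') by ring]
  refine (abs_sub _ _).trans ?_
  rw [abs_mul, abs_mul, abs_of_nonneg ha, abs_of_nonneg hb]

theorem shaped_bellman_contraction_general {S A : Type*} [Fintype S] [Fintype A] [Nonempty A]
    (r : S → A → ℝ) (γ η : ℝ) (hγ0 : 0 ≤ γ) (hη : 0 ≤ η)
    (hηsmall : η < (1 - γ) / (1 + γ))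
    (P : S → A → S → ℝ) (hP0 : ∀ s a s', 0 ≤ P s a s') (hP1 : ∀ s a, ∑ s', P s a s' = 1)
    (T : (S → A → ℝ) → (S → A → ℝ))
    (hT : ∀ Q s a, T Q s a =
      r s a + γ * (∑ s', P s a s' * (η * ⨆ a' : A, Q s' a'))
        - η * (⨆ a' : A, Q s a')
        + γ * (∑ s', P s a s' * ⨆ a' : A, Q s' a')) :
    η * (1 + γ) + γ < 1 ∧
      ∀ Q1 Q2 : S → A → ℝ, dist (T Q1) (T Q2) ≤ (η * (1 + γ) + γ) * dist Q1 Q2 := by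
  have hK : η * (1 + γ) + γ < 1 := by
    have := (lt_div_iff₀ (by linarith : (0 : ℝ) < 1 + γ)).mp hηsmall
    linarith
  refine ⟨hK, fun Q1 Q2 => ?_⟩
  set V : (S → A → ℝ) → S → ℝ := fun Q s => ⨆ a, Q s a
  have hV : dist (V Q1) (V Q2) ≤ dist Q1 Q2 := dist_ciSup_apply_le_dist Q1 Q2
  have hTV : ∀ Q s a, T Q s a = r s a + γ * (1 + η) * ∑ s', P s a s' * V Q s' - η * V Q s := by
    intro Q s a
    rw [hT]
    simp_rw [mul_left_comm _ η, ← mul_sum]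
    ring
  refine dist_pi_le_iff (by positivity) |>.2 fun s =>
    dist_pi_le_iff (by positivity) |>.2 fun a => ?_
  rw [hTV, hTV]
  calc _ ≤ γ * (1 + η) * dist (∑ s', P s a s' * V Q1 s') (∑ s', P s a s' * V Q2 s')
          + η * dist (V Q1 s) (V Q2 s) := dist_add_mul_sub_mul_le (by positivity) hη
    _ ≤ γ * (1 + η) * dist Q1 Q2 + η * dist Q1 Q2 := by
        gcongr
        · exact (dist_sum_mul_le_dist (hP0 s a) (hP1 s a).le _ _).trans hV
        · exact (dist_le_pi_dist _ _ s).trans hV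
    _ = (η * (1 + γ) + γ) * dist Q1 Q2 := by ring

/-- If `η < (1 − γ)/(1 + γ)`, then the shaped Bellman operator is a contraction
on `S × A → ℝ` with the sup-norm metric, with Lipschitz constant `η(1+γ) + γ < 1`. -/
theorem shaped_bellman_contraction {S A : Type*} [Fintype S] [Nonempty S] [Fintype A] [Nonempty A]
    (r : S → A → ℝ) (γ η : ℝ) (hγ0 : 0 ≤ γ) (hγ1 : γ < 1) (hη : 0 ≤ η)
    (hηsmall : η < (1 - γ) / (1 + γ))
    (P : S → A → S → ℝ) (hP0 : ∀ s a s', 0 ≤ P s a s') (hP1 : ∀ s a, ∑ s', P s a s' = 1)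
    (T : (S → A → ℝ) → (S → A → ℝ))
    (hT : ∀ Q s a, T Q s a =
      r s a + γ * (∑ s', P s a s' * (η * ⨆ a' : A, Q s' a'))
        - η * (⨆ a' : A, Q s a')
        + γ * (∑ s', P s a s' * ⨆ a' : A, Q s' a')) :
    η * (1 + γ) + γ < 1 ∧
      ∀ Q1 Q2 : S → A → ℝ, dist (T Q1) (T Q2) ≤ (η * (1 + γ) + γ) * dist Q1 Q2 :=
  shaped_bellman_contraction_general r γ η hγ0 hη hηsmall P hP0 hP1 T hT
end

section
/- In the infinite-horizon limit, for γ ∈ [0,1) and bounded Φ, the shaped return of an infinite trajectory equals the original return minus Φ(s_0): ∑_{t=0}^∞ γ^t (r(s_t,a_t) + γΦ(s_{t+1}) − Φ(s_t)) = ∑_{t=0}^∞ γ^t r(s_t,a_t) − Φ(s_0), where both series converge absolutely when r and Φ are bounded. -/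
lemma pbrs_aux {γ : ℝ} (hγ0 : 0 ≤ γ) (hγ1 : γ < 1) (f : ℕ → ℝ) (C : ℝ)
    (hf : ∀ t, |f t| ≤ C) : Summable (fun t : ℕ => γ ^ t * f t) := by
  apply Summable.of_norm_bounded
    ((summable_geometric_of_lt_one hγ0 hγ1).mul_left C)
  intro t
  rw [Real.norm_eq_abs, abs_mul, abs_pow, abs_of_nonneg hγ0, mul_comm]
  exact mul_le_mul_of_nonneg_right (hf t) (pow_nonneg hγ0 t)

/-- Infinite-horizon shaped return: for `γ ∈ [0,1)`, `r` bounded by `Rmax` and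
`Φ` bounded by `Φmax`, both series converge absolutely and
`∑_{t=0}^∞ γ^t (r(s_t,a_t) + γΦ(s_{t+1}) − Φ(s_t)) = ∑_{t=0}^∞ γ^t r(s_t,a_t) − Φ(s_0)`. -/
theorem pbrs_infinite_telescoping {S A : Type*} (γ : ℝ) (hγ0 : 0 ≤ γ) (hγ1 : γ < 1)
    (r : S → A → ℝ) (Φ : S → ℝ) (Rmax Φmax : ℝ)
    (hr : ∀ s a, |r s a| ≤ Rmax) (hΦ : ∀ s, |Φ s| ≤ Φmax)
    (s : ℕ → S) (a : ℕ → A) :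
    Summable (fun t : ℕ => γ ^ t * (r (s t) (a t) + γ * Φ (s (t + 1)) - Φ (s t))) ∧
    Summable (fun t : ℕ => γ ^ t * r (s t) (a t)) ∧
    (∑' t : ℕ, γ ^ t * (r (s t) (a t) + γ * Φ (s (t + 1)) - Φ (s t))) =
      (∑' t : ℕ, γ ^ t * r (s t) (a t)) - Φ (s 0) := by
  have hf : Summable (fun t : ℕ => γ ^ t * r (s t) (a t)) :=
    pbrs_aux hγ0 hγ1 _ Rmax (fun t => hr _ _)
  have hG : Summable (fun t : ℕ => γ ^ t * Φ (s t)) :=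
    pbrs_aux hγ0 hγ1 _ Φmax (fun t => hΦ _)
  have hG' : Summable (fun t : ℕ => γ ^ (t + 1) * Φ (s (t + 1))) :=
    (summable_nat_add_iff 1).mpr hG
  have hkey : ∀ t : ℕ, γ ^ t * (r (s t) (a t) + γ * Φ (s (t + 1)) - Φ (s t)) =
      γ ^ t * r (s t) (a t) + (γ ^ (t + 1) * Φ (s (t + 1)) - γ ^ t * Φ (s t)) := by
    intro t; ring
  have hsum : Summable (fun t : ℕ => γ ^ t * (r (s t) (a t) + γ * Φ (s (t + 1)) - Φ (s t))) := by
    simp only [hkey]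
    exact hf.add (hG'.sub hG)
  refine ⟨hsum, hf, ?_⟩
  have h1 : (∑' t : ℕ, γ ^ t * (r (s t) (a t) + γ * Φ (s (t + 1)) - Φ (s t))) =
      (∑' t : ℕ, γ ^ t * r (s t) (a t)) +
      ((∑' t : ℕ, γ ^ (t + 1) * Φ (s (t + 1))) - ∑' t : ℕ, γ ^ t * Φ (s t)) := by
    simp only [hkey]
    rw [Summable.tsum_add hf (hG'.sub hG), Summable.tsum_sub hG' hG]
  have h2 : (∑' t : ℕ, γ ^ t * Φ (s t)) =
      γ ^ 0 * Φ (s 0) + ∑' t : ℕ, γ ^ (t + 1) * Φ (s (t + 1)) := Summable.tsum_eq_zero_add hG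
  rw [h1, h2]
  simp
  ring
end
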